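/- If the end-to-end product equals the minimum-norm interpolator W_{L:1} = Y(XᵀX)^{-1}Xᵀ with Y = I_K ⊗ 1_nᵀ and X is θ-nearly orthonormal (θ ∈ [0,1/4)), then the K-th largest and the largest singular values of W_{L:1} satisfy √n/√(1+θ) ≤ σ_K(W_{L:1}) ≤ σ_1(W_{L:1}) ≤ √n/√(1−θ). -/

import Mathlib

open scoped BigOperators
open Matrix

/-!
With `G = XᵀX`, the entrywise bounds on `G - 1` give `|zᵀGz - ‖z‖²| ≤ θ‖z‖²`, i.e.
`(1 - θ) ≤ G ≤ (1 + θ)` as quadratic forms. Writing `W = Y X⁺` with `X⁺ = G⁻¹Xᵀ`, both singular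
value bounds come from Cauchy–Schwarz for the Gram form `⟨Xa, Xb⟩ = aᵀGb`:
`‖X⁺v‖² ≤ ‖v‖² / (1 - θ)` and `‖(X⁺)ᵀw‖² ≥ ‖w‖² / (1 + θ)`. Finally `‖Yᵀu‖² = n‖u‖²` and
`‖Yp‖² ≤ n‖p‖²` by Cauchy–Schwarz within each class.
-/

noncomputable def euclNorm {n : Type*} [Fintype n] (v : n → ℝ) : ℝ :=
  Real.sqrt (∑ i, v i ^ 2)

section

variable {ι m : Type*} [Fintype ι] [Fintype m]

lemma euclNorm_eq_sqrt_dotProduct (v : ι → ℝ) : euclNorm v = √(v ⬝ᵥ v) := by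
  simp only [euclNorm, dotProduct, sq]

lemma dotProduct_self_nonneg (v : ι → ℝ) : 0 ≤ v ⬝ᵥ v := by
  simpa using dotProduct_self_star_nonneg v

lemma sqrt_div_mul_euclNorm_le {a b : ℝ} (hb : 0 < b) {u : ι → ℝ} {w : m → ℝ}
    (h : a * (u ⬝ᵥ u) ≤ b * (w ⬝ᵥ w)) : √(a / b) * euclNorm u ≤ euclNorm w := by
  rw [euclNorm_eq_sqrt_dotProduct, euclNorm_eq_sqrt_dotProduct,
    ← Real.sqrt_mul' _ (dotProduct_self_nonneg u)]
  refine Real.sqrt_le_sqrt ?_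
  rw [div_mul_eq_mul_div, div_le_iff₀ hb]
  linarith

lemma euclNorm_le_sqrt_div_mul {a b : ℝ} (hb : 0 < b) {u : ι → ℝ} {w : m → ℝ}
    (h : b * (w ⬝ᵥ w) ≤ a * (u ⬝ᵥ u)) : euclNorm w ≤ √(a / b) * euclNorm u := by
  rw [euclNorm_eq_sqrt_dotProduct, euclNorm_eq_sqrt_dotProduct,
    ← Real.sqrt_mul' _ (dotProduct_self_nonneg u)]
  refine Real.sqrt_le_sqrt ?_
  rw [div_mul_eq_mul_div, le_div_iff₀ hb]
  linarith

lemma le_of_sq_le_mul {s t : ℝ} (ht : 0 ≤ t) (h : s ^ 2 ≤ s * t) : s ≤ t := by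
  nlinarith

lemma dotProduct_sq_le (v w : ι → ℝ) : (v ⬝ᵥ w) ^ 2 ≤ (v ⬝ᵥ v) * (w ⬝ᵥ w) := by
  simpa only [dotProduct, sq] using Finset.sum_mul_sq_le_sq_mul_sq Finset.univ v w

lemma abs_dotProduct_mulVec_le {A : Matrix ι ι ℝ} {ε : ℝ} (hA : ∀ i j, |A i j| ≤ ε)
    (z : ι → ℝ) : |z ⬝ᵥ A *ᵥ z| ≤ Fintype.card ι * ε * (z ⬝ᵥ z) := by
  have hterm : ∀ i j, |z i * (A i j * z j)| ≤ ε * (z i ^ 2 + z j ^ 2) / 2 := fun i j => by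
    have hAM : |z i| * |z j| ≤ (z i ^ 2 + z j ^ 2) / 2 := by
      have := two_mul_le_add_sq |z i| |z j|
      rw [sq_abs, sq_abs] at this
      linarith
    calc |z i * (A i j * z j)| = |A i j| * (|z i| * |z j|) := by
          rw [abs_mul, abs_mul]; ring
      _ ≤ ε * ((z i ^ 2 + z j ^ 2) / 2) :=
          mul_le_mul (hA i j) hAM (by positivity) ((abs_nonneg _).trans (hA i j))
      _ = ε * (z i ^ 2 + z j ^ 2) / 2 := by ring
  calc |z ⬝ᵥ A *ᵥ z| = |∑ i, ∑ j, z i * (A i j * z j)| := by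
        simp only [dotProduct, mulVec, Finset.mul_sum]
    _ ≤ ∑ i, ∑ j, ε * (z i ^ 2 + z j ^ 2) / 2 :=
        (Finset.abs_sum_le_sum_abs _ _).trans <| Finset.sum_le_sum fun i _ =>
          (Finset.abs_sum_le_sum_abs _ _).trans <| Finset.sum_le_sum fun j _ => hterm i j
    _ = Fintype.card ι * ε * (z ⬝ᵥ z) := by
        simp only [mul_add, add_div, Finset.sum_add_distrib, Finset.sum_const, Finset.card_univ,
          nsmul_eq_mul, dotProduct, ← Finset.sum_div, ← Finset.mul_sum, sq]
        ring

lemma dotProduct_gram_mulVec (X : Matrix m ι ℝ) (v w : ι → ℝ) :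
    v ⬝ᵥ (Xᵀ * X) *ᵥ w = X *ᵥ v ⬝ᵥ X *ᵥ w := by
  rw [← mulVec_mulVec, dotProduct_transpose_mulVec, dotProduct_comm]

lemma abs_dotProduct_gram_sub_le [DecidableEq ι] {X : Matrix m ι ℝ} {θ : ℝ}
    (hnorm : ∀ c, |(∑ i, X i c ^ 2) - 1| ≤ θ / Fintype.card ι)
    (hinner : ∀ c c', c ≠ c' → |∑ i, X i c * X i c'| ≤ θ / Fintype.card ι) (z : ι → ℝ) :
    |X *ᵥ z ⬝ᵥ X *ᵥ z - z ⬝ᵥ z| ≤ θ * (z ⬝ᵥ z) := by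
  have hentry : ∀ c c', |(Xᵀ * X - 1 : Matrix ι ι ℝ) c c'| ≤ θ / Fintype.card ι := fun c c' => by
    rcases eq_or_ne c c' with rfl | hcc'
    · simpa [mul_apply, sq] using hnorm c
    · simpa [mul_apply, one_apply_ne hcc'] using hinner c c' hcc'
  have hquad : X *ᵥ z ⬝ᵥ X *ᵥ z - z ⬝ᵥ z = z ⬝ᵥ (Xᵀ * X - 1) *ᵥ z := by
    rw [sub_mulVec, one_mulVec, dotProduct_sub, dotProduct_gram_mulVec]
  rw [hquad]
  refine (abs_dotProduct_mulVec_le hentry z).trans_eq ?_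
  rcases isEmpty_or_nonempty ι with hι | hι
  · simp [dotProduct]
  · rw [mul_div_cancel₀ _ (by positivity)]

lemma isUnit_det_gram_of_le {X : Matrix m ι ℝ} [DecidableEq ι] {c : ℝ} (hc : 0 < c)
    (h : ∀ z, c * (z ⬝ᵥ z) ≤ X *ᵥ z ⬝ᵥ X *ᵥ z) : IsUnit (Xᵀ * X).det := by
  refine (isUnit_iff_isUnit_det _).mp <| mulVec_injective_iff_isUnit.mp fun z z' hzz' =>
    sub_eq_zero.mp ?_
  have hker : (Xᵀ * X) *ᵥ (z - z') = 0 := by rw [mulVec_sub, hzz', sub_self]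
  have hnonpos := h (z - z')
  rw [← dotProduct_gram_mulVec, hker, dotProduct_zero] at hnonpos
  exact dotProduct_self_eq_zero.mp <| le_antisymm
    (nonpos_of_mul_nonpos_right hnonpos hc) (dotProduct_self_nonneg _)

/-- The Moore–Penrose pseudoinverse `X⁺` when `X` has full column rank. -/
noncomputable def pseudoInv [DecidableEq ι] (X : Matrix m ι ℝ) : Matrix ι m ℝ :=
  (Xᵀ * X)⁻¹ * Xᵀ

lemma pseudoInv_transpose [DecidableEq ι] (X : Matrix m ι ℝ) :
    (pseudoInv X)ᵀ = X * (Xᵀ * X)⁻¹ := by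
  rw [pseudoInv, transpose_mul, transpose_transpose, transpose_nonsing_inv, transpose_mul,
    transpose_transpose]

lemma dotProduct_self_le_mul_pseudoInv_transpose_mulVec [DecidableEq ι] {X : Matrix m ι ℝ}
    (hX : IsUnit (Xᵀ * X).det) {c : ℝ} (hc : 0 ≤ c) (h : ∀ w, X *ᵥ w ⬝ᵥ X *ᵥ w ≤ c * (w ⬝ᵥ w))
    (w : ι → ℝ) : w ⬝ᵥ w ≤ c * ((pseudoInv X)ᵀ *ᵥ w ⬝ᵥ (pseudoInv X)ᵀ *ᵥ w) := by
  rw [pseudoInv_transpose, ← mulVec_mulVec]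
  set z := (Xᵀ * X)⁻¹ *ᵥ w
  have hz : (Xᵀ * X) *ᵥ z = w := by rw [mulVec_mulVec, mul_nonsing_inv _ hX, one_mulVec]
  have hXz := dotProduct_self_nonneg (X *ᵥ z)
  refine le_of_sq_le_mul (mul_nonneg hc hXz) ?_
  calc (w ⬝ᵥ w) ^ 2 = (X *ᵥ w ⬝ᵥ X *ᵥ z) ^ 2 := by rw [← dotProduct_gram_mulVec, hz]
    _ ≤ (X *ᵥ w ⬝ᵥ X *ᵥ w) * (X *ᵥ z ⬝ᵥ X *ᵥ z) := dotProduct_sq_le _ _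
    _ ≤ c * (w ⬝ᵥ w) * (X *ᵥ z ⬝ᵥ X *ᵥ z) := mul_le_mul_of_nonneg_right (h w) hXz
    _ = (w ⬝ᵥ w) * (c * (X *ᵥ z ⬝ᵥ X *ᵥ z)) := by ring

lemma mul_dotProduct_self_pseudoInv_mulVec_le [DecidableEq ι] {X : Matrix m ι ℝ}
    (hX : IsUnit (Xᵀ * X).det) {c : ℝ} (h : ∀ z, c * (z ⬝ᵥ z) ≤ X *ᵥ z ⬝ᵥ X *ᵥ z) (v : m → ℝ) :
    c * (pseudoInv X *ᵥ v ⬝ᵥ pseudoInv X *ᵥ v) ≤ v ⬝ᵥ v := by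
  have hp : (Xᵀ * X) *ᵥ (pseudoInv X *ᵥ v) = Xᵀ *ᵥ v := by
    rw [pseudoInv, mulVec_mulVec, ← Matrix.mul_assoc, mul_nonsing_inv _ hX, Matrix.one_mul]
  set p := pseudoInv X *ᵥ v
  have hXp : X *ᵥ p ⬝ᵥ X *ᵥ p = X *ᵥ p ⬝ᵥ v := by
    rw [← dotProduct_gram_mulVec, hp, dotProduct_transpose_mulVec, dotProduct_comm]
  have hXpv : X *ᵥ p ⬝ᵥ X *ᵥ p ≤ v ⬝ᵥ v := by
    refine le_of_sq_le_mul (dotProduct_self_nonneg v) ?_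
    calc (X *ᵥ p ⬝ᵥ X *ᵥ p) ^ 2 = (X *ᵥ p ⬝ᵥ v) ^ 2 := by rw [hXp]
      _ ≤ (X *ᵥ p ⬝ᵥ X *ᵥ p) * (v ⬝ᵥ v) := dotProduct_sq_le _ _
  exact (h p).trans hXpv

end

section

variable {κ ν : Type*} [Fintype κ] [DecidableEq κ]

/-- The one-hot label matrix `I_K ⊗ 1_nᵀ`, with samples indexed by (class, index in class). -/
def labelMatrix (κ ν : Type*) [DecidableEq κ] : Matrix κ (κ × ν) ℝ :=
  of fun k c => if c.1 = k then 1 else 0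

lemma labelMatrix_transpose_mulVec_apply (u : κ → ℝ) (c : κ × ν) :
    ((labelMatrix κ ν)ᵀ *ᵥ u) c = u c.1 := by
  simp [labelMatrix, mulVec, dotProduct]

lemma dotProduct_self_labelMatrix_transpose_mulVec [Fintype ν] (u : κ → ℝ) :
    (labelMatrix κ ν)ᵀ *ᵥ u ⬝ᵥ (labelMatrix κ ν)ᵀ *ᵥ u = Fintype.card ν * (u ⬝ᵥ u) := by
  simp only [dotProduct, labelMatrix_transpose_mulVec_apply, Fintype.sum_prod_type,
    Finset.sum_const, Finset.card_univ, nsmul_eq_mul, Finset.mul_sum]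

lemma labelMatrix_mulVec_apply [Fintype ν] (p : κ × ν → ℝ) (k : κ) :
    (labelMatrix κ ν *ᵥ p) k = ∑ j, p (k, j) := by
  simp [labelMatrix, mulVec, dotProduct, Fintype.sum_prod_type_right]

lemma dotProduct_self_labelMatrix_mulVec_le [Fintype ν] (p : κ × ν → ℝ) :
    labelMatrix κ ν *ᵥ p ⬝ᵥ labelMatrix κ ν *ᵥ p ≤ Fintype.card ν * (p ⬝ᵥ p) := by
  simp only [dotProduct, labelMatrix_mulVec_apply, Fintype.sum_prod_type, ← sq]
  rw [Finset.mul_sum]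
  refine Finset.sum_le_sum fun k _ => ?_
  simpa using sq_sum_le_card_mul_sum_sq (s := Finset.univ) (f := fun j => p (k, j))

end

theorem min_norm_interpolator_singular_values_general {d K n : ℕ}
    (X : Matrix (Fin d) (Fin K × Fin n) ℝ) (θ : ℝ) (hθ0 : 0 ≤ θ) (hθ : θ < 1 / 4)
    (hnorm : ∀ c, |(∑ i, X i c ^ 2) - 1| ≤ θ / (n * K))
    (hinner : ∀ c c', c ≠ c' → |∑ i, X i c * X i c'| ≤ θ / (n * K))
    (Y : Matrix (Fin K) (Fin K × Fin n) ℝ)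
    (hY : Y = Matrix.of fun (k : Fin K) (c : Fin K × Fin n) => if c.1 = k then (1 : ℝ) else 0)
    (W : Matrix (Fin K) (Fin d) ℝ) (hW : W = Y * (Xᵀ * X)⁻¹ * Xᵀ) :
    (∀ u : Fin K → ℝ,
      Real.sqrt (n / (1 + θ)) * euclNorm u ≤ euclNorm (Wᵀ.mulVec u)) ∧
    (∀ v : Fin d → ℝ,
      euclNorm (W.mulVec v) ≤ Real.sqrt (n / (1 - θ)) * euclNorm v) := by
  have hcard : ((Fintype.card (Fin K × Fin n) : ℕ) : ℝ) = n * K := by simp [mul_comm]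
  have hiso := abs_dotProduct_gram_sub_le (X := X) (hcard ▸ hnorm) (hcard ▸ hinner)
  have hlower z : (1 - θ) * (z ⬝ᵥ z) ≤ X *ᵥ z ⬝ᵥ X *ᵥ z := by linarith [(abs_le.mp (hiso z)).1]
  have hupper z : X *ᵥ z ⬝ᵥ X *ᵥ z ≤ (1 + θ) * (z ⬝ᵥ z) := by linarith [(abs_le.mp (hiso z)).2]
  have hdet := isUnit_det_gram_of_le (by linarith) hlower
  obtain rfl : Y = labelMatrix (Fin K) (Fin n) := hY
  obtain rfl : W = labelMatrix (Fin K) (Fin n) * pseudoInv X := by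
    rw [hW, pseudoInv, Matrix.mul_assoc]
  constructor
  · intro u
    have hYu := dotProduct_self_labelMatrix_transpose_mulVec (ν := Fin n) u
    rw [Fintype.card_fin] at hYu
    refine sqrt_div_mul_euclNorm_le (by linarith) ?_
    rw [← hYu, transpose_mul, ← mulVec_mulVec]
    exact dotProduct_self_le_mul_pseudoInv_transpose_mulVec hdet (by linarith) hupper _
  · intro v
    have hYp := dotProduct_self_labelMatrix_mulVec_le (pseudoInv X *ᵥ v)
    rw [Fintype.card_fin] at hYp
    refine euclNorm_le_sqrt_div_mul (by linarith) ?_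
    calc (1 - θ) * (_ ⬝ᵥ _) ≤ (1 - θ) * (n * (pseudoInv X *ᵥ v ⬝ᵥ pseudoInv X *ᵥ v)) := by
          rw [← mulVec_mulVec]
          exact mul_le_mul_of_nonneg_left hYp (by linarith)
      _ = n * ((1 - θ) * (pseudoInv X *ᵥ v ⬝ᵥ pseudoInv X *ᵥ v)) := by ring
      _ ≤ n * (v ⬝ᵥ v) := by
          gcongr
          exact mul_dotProduct_self_pseudoInv_mulVec_le hdet hlower v

/-- For the minimum-norm interpolator `W = Y(XᵀX)⁻¹Xᵀ` with one-hot label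
matrix `Y = I_K ⊗ 1_nᵀ` and θ-nearly orthonormal data `X` (θ ∈ [0,1/4),
`d ≥ N = nK`), the `K`-th and first singular values of `W` satisfy
`√(n/(1+θ)) ≤ σ_K(W) ≤ σ_1(W) ≤ √(n/(1−θ))`, expressed as
`√(n/(1+θ))·‖u‖ ≤ ‖Wᵀu‖` for all `u ∈ ℝ^K` and `‖Wv‖ ≤ √(n/(1−θ))·‖v‖`
for all `v ∈ ℝ^d`. -/
theorem min_norm_interpolator_singular_values {d K n : ℕ}
    (hn : 0 < n) (hK : 0 < K) (hdN : n * K ≤ d)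
    (X : Matrix (Fin d) (Fin K × Fin n) ℝ) (θ : ℝ) (hθ0 : 0 ≤ θ) (hθ : θ < 1 / 4)
    (hnorm : ∀ c, |(∑ i, X i c ^ 2) - 1| ≤ θ / (n * K))
    (hinner : ∀ c c', c ≠ c' → |∑ i, X i c * X i c'| ≤ θ / (n * K))
    (Y : Matrix (Fin K) (Fin K × Fin n) ℝ)
    (hY : Y = Matrix.of fun (k : Fin K) (c : Fin K × Fin n) => if c.1 = k then (1 : ℝ) else 0)
    (W : Matrix (Fin K) (Fin d) ℝ) (hW : W = Y * (Xᵀ * X)⁻¹ * Xᵀ) :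
    (∀ u : Fin K → ℝ,
      Real.sqrt (n / (1 + θ)) * euclNorm u ≤ euclNorm (Wᵀ.mulVec u)) ∧
    (∀ v : Fin d → ℝ,
      euclNorm (W.mulVec v) ≤ Real.sqrt (n / (1 - θ)) * euclNorm v) :=
  min_norm_interpolator_singular_values_general X θ hθ0 hθ hnorm hinner Y hY W hW
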